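/- Let α, β be compositions with β ⊆ α, β nonempty, and β_i < α_i for all 1 ≤ i ≤ ℓ(β). Set D₁ = (α_{ℓ(β)+1},…,α_{ℓ(α)}). Then the dual immaculate function factors as 𝔖*_{α/β} = 𝔖*_{D₁} · ∏_{i=1}^{ℓ(β)} s_{(α_i − β_i)}, where s_{(k)} is the Schur function of a single row of length k. -/

import Mathlib

/-!
Formalization framework.

* A composition is a `List ℕ` of positive parts (bottom row first); a partition is a
  composition with weakly decreasing parts.
* `cells α β` is the set of cells of the skew diagram `α/β`, a cell being a pair
  `(i, j)` of a row index `i` and a column index `j` (both `0`-indexed; row `i`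
  corresponds to row `i+1` of the paper, counted from the bottom).
* Tableaux are fillings `T : ℕ × ℕ → ℕ` of the cells (entries in `ℕ`, i.e. the
  positive integers `1,2,3,…` relabelled as `0,1,2,…`, which is harmless), with `T = 0`
  off the cells.
* All the Schur-like functions are formal power series in `MvPowerSeries ℕ ℚ`
  (variables `x_i`, `i : ℕ`): the coefficient of the monomial `d : ℕ →₀ ℕ` is the
  number of admissible tableaux of content `d`.
* Such a series is symmetric iff it is invariant under every permutation of the
  variables.
-/

open scoped Classical

namespace SQS

/-- A composition: a finite list of positive integers (the parts). -/
def IsComposition (α : List ℕ) : Prop := ∀ x ∈ α, 0 < x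

/-- A partition: a composition whose parts weakly decrease. -/
def IsPartitionL (α : List ℕ) : Prop := IsComposition α ∧ α.Pairwise (· ≥ ·)

/-- `β ⊆ α` for diagrams of compositions: `β` is no longer than `α` and each part of
`β` is at most the corresponding part of `α`. -/
def Subdiagram (β α : List ℕ) : Prop :=
  β.length ≤ α.length ∧ ∀ i < β.length, β.getD i 0 ≤ α.getD i 0

/-- The cells of the skew diagram `α/β`: cell `(i, j)` (row `i` from the bottom,
column `j`, both `0`-indexed) belongs to `α/β` iff `i < ℓ(α)` and `β_i ≤ j < α_i`. -/
noncomputable def cells (α β : List ℕ) : Finset (ℕ × ℕ) :=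
  (Finset.range α.length ×ˢ Finset.range (α.foldr max 0)).filter
    fun c => β.getD c.1 0 ≤ c.2 ∧ c.2 < α.getD c.1 0

/-- The set of columns spanned by the cells of row `i` of `α/β`. -/
def colsOfRow (α β : List ℕ) (i : ℕ) : Set ℕ := {j | (i, j) ∈ cells α β}

/-- `α/β` is connected: its rows cannot be partitioned into two nonempty sets such
that the sets of columns spanned by the cells in the two sets of rows are disjoint. -/
def ConnectedDiagram (α β : List ℕ) : Prop :=
  ¬ ∃ R₁ R₂ : Set ℕ, R₁.Nonempty ∧ R₂.Nonempty ∧ Disjoint R₁ R₂ ∧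
      R₁ ∪ R₂ = Set.Iio α.length ∧
      Disjoint (⋃ i ∈ R₁, colsOfRow α β i) (⋃ i ∈ R₂, colsOfRow α β i)

/-- Every row of `α/β` contains at least one cell, i.e. `β_i < α_i` for all
`1 ≤ i ≤ ℓ(β)` (rows beyond `ℓ(β)` automatically contain cells). -/
def RowsNonempty (α β : List ℕ) : Prop := ∀ i < β.length, β.getD i 0 < α.getD i 0

/-- A filling of the cell set `s`: arbitrary entries on `s` and `0` off `s`. -/
def IsFilling (s : Finset (ℕ × ℕ)) (T : ℕ × ℕ → ℕ) : Prop := ∀ c, c ∉ s → T c = 0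

/-- Row condition: any two entries in the same row, read left to right, are related
by `r`. -/
def RowCond (s : Finset (ℕ × ℕ)) (r : ℕ → ℕ → Prop) (T : ℕ × ℕ → ℕ) : Prop :=
  ∀ i j j', (i, j) ∈ s → (i, j') ∈ s → j < j' → r (T (i, j)) (T (i, j'))

/-- Column condition: any two entries in the same column, read bottom to top, are
related by `r`. -/
def ColCond (s : Finset (ℕ × ℕ)) (r : ℕ → ℕ → Prop) (T : ℕ × ℕ → ℕ) : Prop :=
  ∀ i i' j, (i, j) ∈ s → (i', j) ∈ s → i < i' → r (T (i, j)) (T (i', j))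

/-- First-column condition: any two entries in leftmost-column cells (cells of `s` in
column `0`), read bottom to top, are related by `r`. -/
def FirstColCond (s : Finset (ℕ × ℕ)) (r : ℕ → ℕ → Prop) (T : ℕ × ℕ → ℕ) : Prop :=
  ∀ i i', (i, 0) ∈ s → (i', 0) ∈ s → i < i' → r (T (i, 0)) (T (i', 0))

/-- The content of a filling: `content s T i` is the number of cells of `s` whose
entry equals `i`. -/
noncomputable def content (s : Finset (ℕ × ℕ)) (T : ℕ × ℕ → ℕ) : ℕ →₀ ℕ :=
  ∑ c ∈ s, Finsupp.single (T c) 1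

/-- The generating function `Σ_T x^T` over all fillings of `s` satisfying `P`:
the coefficient of the monomial `d` is the number of such fillings of content `d`. -/
noncomputable def genFun (s : Finset (ℕ × ℕ)) (P : (ℕ × ℕ → ℕ) → Prop) :
    MvPowerSeries ℕ ℚ :=
  fun d => (Nat.card {T : ℕ × ℕ → ℕ // IsFilling s T ∧ P T ∧ content s T = d} : ℚ)

/-- A formal power series is symmetric iff it is invariant under every permutation of
the variables (a permutation `σ` sends the monomial `d` to `Finsupp.mapDomain σ d`). -/
def IsSymmFn (f : MvPowerSeries ℕ ℚ) : Prop :=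
  ∀ (σ : Equiv.Perm ℕ) (d : ℕ →₀ ℕ),
    MvPowerSeries.coeff (Finsupp.mapDomain σ d) f = MvPowerSeries.coeff d f

/-- The (skew) Schur function of an arbitrary cell set: columns strictly increase
bottom to top, rows weakly increase left to right. -/
noncomputable def schurOfCells (s : Finset (ℕ × ℕ)) : MvPowerSeries ℕ ℚ :=
  genFun s fun T => ColCond s (· < ·) T ∧ RowCond s (· ≤ ·) T

/-- The skew Schur function `s_{lam/mu}`. -/
noncomputable def skewSchur (lam mu : List ℕ) : MvPowerSeries ℕ ℚ :=
  schurOfCells (cells lam mu)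

/-- The Schur function `s_lam`. -/
noncomputable def schurF (lam : List ℕ) : MvPowerSeries ℕ ℚ := skewSchur lam []

/-- The dual immaculate function `𝔖*_{α/β}`: first column strict, rows weak. -/
noncomputable def dualImmaculateF (α β : List ℕ) : MvPowerSeries ℕ ℚ :=
  genFun (cells α β) fun T =>
    FirstColCond (cells α β) (· < ·) T ∧ RowCond (cells α β) (· ≤ ·) T

/-- The row-strict dual immaculate function `ℛ𝔖*_{α/β}`: first column weak, rows
strict. -/
noncomputable def rowStrictDualImmaculateF (α β : List ℕ) : MvPowerSeries ℕ ℚ :=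
  genFun (cells α β) fun T =>
    FirstColCond (cells α β) (· ≤ ·) T ∧ RowCond (cells α β) (· < ·) T

/-- The extended Schur function `ε_{α/λ}`: columns strict, rows weak. -/
noncomputable def extendedSchurF (α lam : List ℕ) : MvPowerSeries ℕ ℚ :=
  genFun (cells α lam) fun T =>
    ColCond (cells α lam) (· < ·) T ∧ RowCond (cells α lam) (· ≤ ·) T

/-- The row-strict extended Schur function `ℛε_{α/λ}`: columns weak, rows strict. -/
noncomputable def rowStrictExtendedSchurF (α lam : List ℕ) : MvPowerSeries ℕ ℚ :=
  genFun (cells α lam) fun T =>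
    ColCond (cells α lam) (· ≤ ·) T ∧ RowCond (cells α lam) (· < ·) T

/-- The strictly advanced function `𝒜̄𝔖*_{α/β}`: first column strict, rows strict. -/
noncomputable def strictAdvancedF (α β : List ℕ) : MvPowerSeries ℕ ℚ :=
  genFun (cells α β) fun T =>
    FirstColCond (cells α β) (· < ·) T ∧ RowCond (cells α β) (· < ·) T

/-- The weakly advanced function `𝒜𝔖*_{α/β}`: first column weak, rows weak. -/
noncomputable def weakAdvancedF (α β : List ℕ) : MvPowerSeries ℕ ℚ :=
  genFun (cells α β) fun T =>
    FirstColCond (cells α β) (· ≤ ·) T ∧ RowCond (cells α β) (· ≤ ·) T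

/-- The strictly advanced extended function `𝒜̄ε_{α/λ}`: columns strict, rows strict. -/
noncomputable def strictAdvancedExtendedF (α lam : List ℕ) : MvPowerSeries ℕ ℚ :=
  genFun (cells α lam) fun T =>
    ColCond (cells α lam) (· < ·) T ∧ RowCond (cells α lam) (· < ·) T

/-- The weakly advanced extended function `𝒜ε_{α/λ}`: columns weak, rows weak. -/
noncomputable def weakAdvancedExtendedF (α lam : List ℕ) : MvPowerSeries ℕ ℚ :=
  genFun (cells α lam) fun T =>
    ColCond (cells α lam) (· ≤ ·) T ∧ RowCond (cells α lam) (· ≤ ·) T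
/-! ### Auxiliary development for the factorization theorem -/

/-- Restriction of a filling to a cell set. -/
noncomputable def restrictF (s : Finset (ℕ × ℕ)) (T : ℕ × ℕ → ℕ) : ℕ × ℕ → ℕ :=
  fun c => if c ∈ s then T c else 0

lemma restrictF_isFilling (s : Finset (ℕ × ℕ)) (T : ℕ × ℕ → ℕ) :
    IsFilling s (restrictF s T) := fun _ hc => if_neg hc

lemma restrictF_eq_on (s : Finset (ℕ × ℕ)) (T : ℕ × ℕ → ℕ) {c : ℕ × ℕ} (hc : c ∈ s) :
    restrictF s T c = T c := if_pos hc

lemma content_congr {s : Finset (ℕ × ℕ)} {T T' : ℕ × ℕ → ℕ}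
    (h : ∀ c ∈ s, T c = T' c) : content s T = content s T' :=
  Finset.sum_congr rfl fun c hc => by rw [h c hc]

lemma content_union {s₁ s₂ : Finset (ℕ × ℕ)} (h : Disjoint s₁ s₂) (T : ℕ × ℕ → ℕ) :
    content (s₁ ∪ s₂) T = content s₁ T + content s₂ T :=
  Finset.sum_union h

lemma mem_support_of_content {s : Finset (ℕ × ℕ)} {T : ℕ × ℕ → ℕ} {d : ℕ →₀ ℕ}
    (h : content s T = d) {c : ℕ × ℕ} (hc : c ∈ s) : T c ∈ d.support := by
  subst h
  rw [Finsupp.mem_support_iff]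
  have h1 : (content s T) (T c) = ∑ c' ∈ s, (Finsupp.single (T c') 1) (T c) :=
    Finsupp.finset_sum_apply s _ _
  have h2 : (1 : ℕ) ≤ ∑ c' ∈ s, (Finsupp.single (T c') 1) (T c) := by
    have := Finset.single_le_sum (f := fun c' => (Finsupp.single (T c') 1) (T c))
      (fun i _ => Nat.zero_le _) hc
    simpa using this
  omega

lemma fillings_finite (s : Finset (ℕ × ℕ)) (P : (ℕ × ℕ → ℕ) → Prop) (d : ℕ →₀ ℕ) :
    Finite {T : ℕ × ℕ → ℕ // IsFilling s T ∧ P T ∧ content s T = d} := by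
  set M := d.support.sup id with hM
  apply Finite.of_injective (f := fun (x : {T : ℕ × ℕ → ℕ //
      IsFilling s T ∧ P T ∧ content s T = d}) => fun c : s =>
      (⟨x.1 c, by
        have := mem_support_of_content x.2.2.2 c.2
        have : x.1 c ≤ M := Finset.le_sup (f := id) this
        omega⟩ : Fin (M + 1)))
  intro x y hxy
  apply Subtype.ext
  funext c
  by_cases hc : c ∈ s
  · have := congrFun hxy ⟨c, hc⟩
    simpa [Fin.ext_iff] using this
  · rw [x.2.1 c hc, y.2.1 c hc]

lemma coeff_genFun (s : Finset (ℕ × ℕ)) (P : (ℕ × ℕ → ℕ) → Prop) (d : ℕ →₀ ℕ) :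
    MvPowerSeries.coeff d (genFun s P) =
      (Nat.card {T : ℕ × ℕ → ℕ // IsFilling s T ∧ P T ∧ content s T = d} : ℚ) := rfl

/-- Splitting a generating function over a disjoint union of cell sets. -/
lemma genFun_split (s₁ s₂ : Finset (ℕ × ℕ)) (hd : Disjoint s₁ s₂)
    (P P₁ P₂ : (ℕ × ℕ → ℕ) → Prop)
    (hP : ∀ T, IsFilling (s₁ ∪ s₂) T →
      (P T ↔ P₁ (restrictF s₁ T) ∧ P₂ (restrictF s₂ T))) :
    genFun (s₁ ∪ s₂) P = genFun s₁ P₁ * genFun s₂ P₂ := by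
  ext d
  rw [MvPowerSeries.coeff_mul, coeff_genFun]
  have hterm : ∀ p ∈ Finset.HasAntidiagonal.antidiagonal d,
      MvPowerSeries.coeff p.1 (genFun s₁ P₁) * MvPowerSeries.coeff p.2 (genFun s₂ P₂)
        = (Nat.card ({T : ℕ × ℕ → ℕ // IsFilling s₁ T ∧ P₁ T ∧ content s₁ T = p.1}
            × {T : ℕ × ℕ → ℕ // IsFilling s₂ T ∧ P₂ T ∧ content s₂ T = p.2}) : ℚ) := by
    intro p _
    rw [coeff_genFun, coeff_genFun, Nat.card_prod]
    push_cast
    ring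
  rw [Finset.sum_congr rfl hterm]
  rw [← Nat.cast_sum]
  congr 1
  -- now a natural number identity
  have key : {T : ℕ × ℕ → ℕ // IsFilling (s₁ ∪ s₂) T ∧ P T ∧ content (s₁ ∪ s₂) T = d} ≃
      Σ p : (Finset.HasAntidiagonal.antidiagonal d : Finset ((ℕ →₀ ℕ) × (ℕ →₀ ℕ))),
        ({T : ℕ × ℕ → ℕ // IsFilling s₁ T ∧ P₁ T ∧ content s₁ T = (p : (ℕ →₀ ℕ) × (ℕ →₀ ℕ)).1}
          × {T : ℕ × ℕ → ℕ // IsFilling s₂ T ∧ P₂ T ∧ content s₂ T = (p : (ℕ →₀ ℕ) × (ℕ →₀ ℕ)).2}) := by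
    apply Equiv.ofBijective (f := fun x =>
      ⟨⟨(content s₁ x.1, content s₂ x.1), by
          rw [Finset.HasAntidiagonal.mem_antidiagonal]
          exact ((content_union hd x.1).symm.trans x.2.2.2)⟩,
        (⟨restrictF s₁ x.1, restrictF_isFilling _ _, ((hP x.1 x.2.1).mp x.2.2.1).1,
          content_congr fun c hc => restrictF_eq_on _ _ hc⟩,
         ⟨restrictF s₂ x.1, restrictF_isFilling _ _, ((hP x.1 x.2.1).mp x.2.2.1).2,
          content_congr fun c hc => restrictF_eq_on _ _ hc⟩)⟩)
    constructor
    · intro x y hxy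
      have h2 := congrArg (fun z => (fun c => z.2.1.1 c + z.2.2.1 c : ℕ × ℕ → ℕ)) hxy
      simp only [restrictF] at h2
      apply Subtype.ext
      funext c
      have hx := congrFun h2 c
      by_cases h1 : c ∈ s₁
      · have h1' : c ∉ s₂ := Finset.disjoint_left.mp hd h1
        simpa [h1, h1'] using hx
      · by_cases h2' : c ∈ s₂
        · simpa [h1, h2'] using hx
        · rw [x.2.1 c (by simp [h1, h2']), y.2.1 c (by simp [h1, h2'])]
    · rintro ⟨⟨⟨d₁, d₂⟩, hp⟩, ⟨T₁, hf₁, hP₁, hc₁⟩, ⟨T₂, hf₂, hP₂, hc₂⟩⟩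
      rw [Finset.HasAntidiagonal.mem_antidiagonal] at hp
      dsimp only at hp hc₁ hc₂
      have hr₁ : restrictF s₁ (fun c => T₁ c + T₂ c) = T₁ := by
        funext c
        by_cases hc : c ∈ s₁
        · simp [restrictF, hc, hf₂ c (Finset.disjoint_left.mp hd hc)]
        · simp [restrictF, hc, hf₁ c hc]
      have hr₂ : restrictF s₂ (fun c => T₁ c + T₂ c) = T₂ := by
        funext c
        by_cases hc : c ∈ s₂
        · simp [restrictF, hc, hf₁ c (Finset.disjoint_right.mp hd hc)]
        · simp [restrictF, hc, hf₂ c hc]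
      have hfill : IsFilling (s₁ ∪ s₂) (fun c => T₁ c + T₂ c) := by
        intro c hc
        rw [Finset.mem_union, not_or] at hc
        simp [hf₁ c hc.1, hf₂ c hc.2]
      have he₁ : content s₁ (fun c => T₁ c + T₂ c) = d₁ := by
        rw [← hc₁]
        exact content_congr fun c hc => by
          simp [hf₂ c (Finset.disjoint_left.mp hd hc)]
      have he₂ : content s₂ (fun c => T₁ c + T₂ c) = d₂ := by
        rw [← hc₂]
        exact content_congr fun c hc => by
          simp [hf₁ c (Finset.disjoint_right.mp hd hc)]
      have hcont : content (s₁ ∪ s₂) (fun c => T₁ c + T₂ c) = d := by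
        rw [content_union hd, he₁, he₂, hp]
      have hPT : P (fun c => T₁ c + T₂ c) := by
        rw [hP _ hfill, hr₁, hr₂]; exact ⟨hP₁, hP₂⟩
      refine ⟨⟨fun c => T₁ c + T₂ c, hfill, hPT, hcont⟩, ?_⟩
      subst he₁
      subst he₂
      exact Sigma.ext rfl
        (heq_of_eq (Prod.ext (Subtype.ext hr₁) (Subtype.ext hr₂)))
  rw [Nat.card_congr key]
  haveI : ∀ p : (Finset.HasAntidiagonal.antidiagonal d : Finset ((ℕ →₀ ℕ) × (ℕ →₀ ℕ))),
      Fintype ({T : ℕ × ℕ → ℕ // IsFilling s₁ T ∧ P₁ T ∧ content s₁ T = (p : (ℕ →₀ ℕ) × (ℕ →₀ ℕ)).1}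
        × {T : ℕ × ℕ → ℕ // IsFilling s₂ T ∧ P₂ T ∧ content s₂ T = (p : (ℕ →₀ ℕ) × (ℕ →₀ ℕ)).2}) := by
    intro p
    haveI := fillings_finite s₁ P₁ (p : (ℕ →₀ ℕ) × (ℕ →₀ ℕ)).1
    haveI := fillings_finite s₂ P₂ (p : (ℕ →₀ ℕ) × (ℕ →₀ ℕ)).2
    exact Fintype.ofFinite _
  rw [Nat.card_eq_fintype_card, Fintype.card_sigma]
  rw [← Finset.sum_coe_sort (Finset.HasAntidiagonal.antidiagonal d)]
  exact Finset.sum_congr rfl fun p _ => (Nat.card_eq_fintype_card).symm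

/-- Relabelling a generating function along an injection of cell sets. -/
lemma genFun_reindex (s : Finset (ℕ × ℕ)) (e f : ℕ × ℕ → ℕ × ℕ)
    (hef : ∀ c ∈ s, f (e c) = c) (P Q : (ℕ × ℕ → ℕ) → Prop)
    (hPQ : ∀ T, IsFilling (s.image e) T →
      (Q T ↔ P (fun c => if c ∈ s then T (e c) else 0))) :
    genFun (s.image e) Q = genFun s P := by
  have hinj : ∀ x ∈ s, ∀ y ∈ s, e x = e y → x = y := by
    intro x hx y hy hxy
    rw [← hef x hx, ← hef y hy, hxy]
  ext d
  rw [coeff_genFun, coeff_genFun]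
  congr 1
  apply Nat.card_congr
  refine
    { toFun := fun x => ⟨fun c => if c ∈ s then x.1 (e c) else 0,
        fun c hc => if_neg hc, (hPQ x.1 x.2.1).mp x.2.2.1, ?_⟩
      invFun := fun y => ⟨fun c' => if c' ∈ s.image e then y.1 (f c') else 0,
        fun c hc => if_neg hc, ?_, ?_⟩
      left_inv := ?_
      right_inv := ?_ }
  · -- content
    refine Eq.trans ?_ x.2.2.2
    unfold content
    rw [Finset.sum_image hinj]
    exact Finset.sum_congr rfl fun c hc => by simp [hc]
  · -- Q for invFun
    rw [hPQ _ fun c hc => if_neg hc]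
    have : (fun c => if c ∈ s then
          (if e c ∈ s.image e then y.1 (f (e c)) else 0) else 0) = y.1 := by
      funext c
      by_cases hc : c ∈ s
      · rw [if_pos hc, if_pos (Finset.mem_image_of_mem e hc), hef c hc]
      · rw [if_neg hc, y.2.1 c hc]
    rw [this]
    exact y.2.2.1
  · -- content for invFun
    refine Eq.trans ?_ y.2.2.2
    unfold content
    rw [Finset.sum_image hinj]
    exact Finset.sum_congr rfl fun c hc => by
      simp [Finset.mem_image_of_mem e hc, hef c hc]
  · -- left_inv
    intro x
    apply Subtype.ext
    funext c'
    dsimp only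
    by_cases hc' : c' ∈ s.image e
    · rw [if_pos hc']
      obtain ⟨c, hc, rfl⟩ := Finset.mem_image.mp hc'
      rw [hef c hc, if_pos hc]
    · rw [if_neg hc', x.2.1 c' hc']
  · -- right_inv
    intro y
    apply Subtype.ext
    funext c
    dsimp only
    by_cases hc : c ∈ s
    · rw [if_pos hc, if_pos (Finset.mem_image_of_mem e hc), hef c hc]
    · rw [if_neg hc, y.2.1 c hc]

lemma getD_le_foldr_max : ∀ (l : List ℕ) (i : ℕ), l.getD i 0 ≤ l.foldr max 0 := by
  intro l
  induction l with
  | nil => intro i; simp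
  | cons a l ih =>
    intro i
    cases i with
    | zero => simp
    | succ n =>
      calc l.getD n 0 ≤ l.foldr max 0 := ih n
        _ ≤ max a (l.foldr max 0) := le_max_right _ _
        _ = (a :: l).foldr max 0 := rfl

lemma mem_cells {α β : List ℕ} {i j : ℕ} :
    (i, j) ∈ cells α β ↔ i < α.length ∧ β.getD i 0 ≤ j ∧ j < α.getD i 0 := by
  unfold cells
  simp only [Finset.mem_filter, Finset.mem_product, Finset.mem_range]
  constructor
  · rintro ⟨⟨h1, _⟩, h3, h4⟩
    exact ⟨h1, h3, h4⟩
  · rintro ⟨h1, h3, h4⟩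
    exact ⟨⟨h1, lt_of_lt_of_le h4 (getD_le_foldr_max α i)⟩, h3, h4⟩

lemma mem_cells_single {k i j : ℕ} : (i, j) ∈ cells [k] [] ↔ i = 0 ∧ j < k := by
  rw [mem_cells]
  simp only [List.length_singleton, List.getD_nil]
  constructor
  · rintro ⟨h1, _, h3⟩
    interval_cases i
    · exact ⟨rfl, by simpa using h3⟩
  · rintro ⟨rfl, h⟩
    exact ⟨Nat.one_pos, Nat.zero_le _, by simpa using h⟩

lemma mem_rowSet {a b i j : ℕ} :
    (i, j) ∈ (cells [a - b] []).image (fun c => (c.1, c.2 + b)) ↔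
      i = 0 ∧ b ≤ j ∧ j < a := by
  simp only [Finset.mem_image, Prod.exists]
  constructor
  · rintro ⟨i', j', hm, heq⟩
    rw [mem_cells_single] at hm
    obtain ⟨h1, h2⟩ := Prod.mk.injEq .. ▸ heq
    obtain ⟨rfl, h3⟩ := hm
    refine ⟨h1.symm ▸ rfl, ?_, ?_⟩ <;> omega
  · rintro ⟨rfl, h1, h2⟩
    exact ⟨0, j - b, mem_cells_single.mpr ⟨rfl, by omega⟩, by simp; omega⟩

lemma mem_shiftSet {α β : List ℕ} {i j : ℕ} :
    (i, j) ∈ (cells α β).image (fun c => (c.1 + 1, c.2)) ↔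
      ∃ i', (i', j) ∈ cells α β ∧ i = i' + 1 := by
  simp only [Finset.mem_image, Prod.exists]
  constructor
  · rintro ⟨i', j', hm, heq⟩
    obtain ⟨h1, h2⟩ := Prod.mk.injEq .. ▸ heq
    exact ⟨i', h2 ▸ hm, h1.symm⟩
  · rintro ⟨i', hm, rfl⟩
    exact ⟨i', j, hm, rfl⟩

lemma cells_cons (a b : ℕ) (α β : List ℕ) :
    cells (a :: α) (b :: β) =
      (cells [a - b] []).image (fun c => (c.1, c.2 + b)) ∪
        (cells α β).image (fun c => (c.1 + 1, c.2)) := by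
  ext ⟨i, j⟩
  rw [Finset.mem_union, mem_cells, mem_rowSet, mem_shiftSet]
  constructor
  · rintro ⟨h1, h2, h3⟩
    cases i with
    | zero =>
      refine Or.inl ⟨rfl, ?_, ?_⟩
      · simpa using h2
      · simpa using h3
    | succ n =>
      refine Or.inr ⟨n, mem_cells.mpr ⟨?_, ?_, ?_⟩, rfl⟩
      · simp only [List.length_cons] at h1; omega
      · simpa using h2
      · simpa using h3
  · rintro (⟨rfl, h2, h3⟩ | ⟨i', hm, rfl⟩)
    · refine ⟨by simp, ?_, ?_⟩
      · simpa using h2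
      · simpa using h3
    · rw [mem_cells] at hm
      refine ⟨?_, ?_, ?_⟩
      · simp only [List.length_cons]; omega
      · simpa using hm.2.1
      · simpa using hm.2.2

/-- The key peeling lemma: removing the bottom row. -/
lemma key_peel (a b : ℕ) (α β : List ℕ) (hb : 0 < b) :
    dualImmaculateF (a :: α) (b :: β) = schurF [a - b] * dualImmaculateF α β := by
  classical
  have hdisj : Disjoint ((cells [a - b] []).image (fun c => (c.1, c.2 + b)))
      ((cells α β).image (fun c => (c.1 + 1, c.2))) := by
    rw [Finset.disjoint_left]
    rintro ⟨i, j⟩ h1 h2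
    rw [mem_rowSet] at h1
    rw [mem_shiftSet] at h2
    obtain ⟨i', _, hi⟩ := h2
    omega
  unfold dualImmaculateF schurF skewSchur schurOfCells
  rw [cells_cons a b α β]
  rw [genFun_split _ _ hdisj _
      (fun T => RowCond ((cells [a - b] []).image (fun c => (c.1, c.2 + b))) (· ≤ ·) T)
      (fun T => FirstColCond ((cells α β).image (fun c => (c.1 + 1, c.2))) (· < ·) T ∧
        RowCond ((cells α β).image (fun c => (c.1 + 1, c.2))) (· ≤ ·) T) ?_]
  · congr 1
    · -- genFun of the bottom row = schur of a single row
      apply genFun_reindex (cells [a - b] []) (fun c => (c.1, c.2 + b))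
        (fun c => (c.1, c.2 - b)) (fun c _ => by simp)
      intro T hT
      constructor
      · intro hrow
        constructor
        · -- ColCond vacuous
          rintro i i' j hm hm' hii'
          rw [mem_cells_single] at hm hm'
          omega
        · rintro i j j' hm hm' hjj'
          have hm0 := hm
          have hm0' := hm'
          rw [mem_cells_single] at hm0 hm0'
          obtain ⟨rfl, hj⟩ := hm0
          obtain ⟨-, hj'⟩ := hm0'
          have m1 : ((0 : ℕ), j + b) ∈ (cells [a - b] []).image (fun c => (c.1, c.2 + b)) :=
            mem_rowSet.mpr ⟨rfl, by omega, by omega⟩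
          have m2 : ((0 : ℕ), j' + b) ∈ (cells [a - b] []).image (fun c => (c.1, c.2 + b)) :=
            mem_rowSet.mpr ⟨rfl, by omega, by omega⟩
          have key := hrow 0 (j + b) (j' + b) m1 m2 (by omega)
          simpa [hm, hm'] using key
      · rintro ⟨-, hrow⟩ i j j' hm hm' hjj'
        rw [mem_rowSet] at hm hm'
        obtain ⟨rfl, hbj, hja⟩ := hm
        obtain ⟨-, hbj', hja'⟩ := hm'
        have m1 : ((0 : ℕ), j - b) ∈ cells [a - b] [] :=
          mem_cells_single.mpr ⟨rfl, by omega⟩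
        have m2 : ((0 : ℕ), j' - b) ∈ cells [a - b] [] :=
          mem_cells_single.mpr ⟨rfl, by omega⟩
        have key := hrow 0 (j - b) (j' - b) m1 m2 (by omega)
        simp only [m1, m2, if_pos, if_true] at key
        have e1 : j - b + b = j := by omega
        have e2 : j' - b + b = j' := by omega
        simp only [e1, e2] at key
        exact key
    · -- genFun of the shifted part = dual immaculate of α/β
      apply genFun_reindex (cells α β) (fun c => (c.1 + 1, c.2))
        (fun c => (c.1 - 1, c.2)) (fun c _ => by simp)
      intro T hT
      constructor
      · rintro ⟨hcol, hrow⟩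
        constructor
        · rintro i i' hm hm' hii'
          have m1 : ((i + 1 : ℕ), 0) ∈ (cells α β).image (fun c => (c.1 + 1, c.2)) :=
            mem_shiftSet.mpr ⟨i, hm, rfl⟩
          have m2 : ((i' + 1 : ℕ), 0) ∈ (cells α β).image (fun c => (c.1 + 1, c.2)) :=
            mem_shiftSet.mpr ⟨i', hm', rfl⟩
          have key := hcol (i + 1) (i' + 1) m1 m2 (by omega)
          simpa [hm, hm'] using key
        · rintro i j j' hm hm' hjj'
          have m1 : ((i + 1 : ℕ), j) ∈ (cells α β).image (fun c => (c.1 + 1, c.2)) :=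
            mem_shiftSet.mpr ⟨i, hm, rfl⟩
          have m2 : ((i + 1 : ℕ), j') ∈ (cells α β).image (fun c => (c.1 + 1, c.2)) :=
            mem_shiftSet.mpr ⟨i, hm', rfl⟩
          have key := hrow (i + 1) j j' m1 m2 hjj'
          simpa [hm, hm'] using key
      · rintro ⟨hcol, hrow⟩
        constructor
        · rintro i i' hm hm' hii'
          rw [mem_shiftSet] at hm hm'
          obtain ⟨i₁, hm1, rfl⟩ := hm
          obtain ⟨i₂, hm2, rfl⟩ := hm'
          have key := hcol i₁ i₂ hm1 hm2 (by omega)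
          simpa [hm1, hm2] using key
        · rintro i j j' hm hm' hjj'
          rw [mem_shiftSet] at hm hm'
          obtain ⟨i₁, hm1, rfl⟩ := hm
          obtain ⟨i₂, hm2, hi⟩ := hm'
          have hii : i₂ = i₁ := by omega
          rw [hii] at hm2
          have key := hrow i₁ j j' hm1 hm2 hjj'
          simpa [hm1, hm2] using key
  · -- splitting of the predicate over the disjoint union
    intro T hT
    have hcol0 : ∀ i : ℕ, (i, (0 : ℕ)) ∈ (cells [a - b] []).image (fun c => (c.1, c.2 + b)) →
        False := by
      intro i h
      rw [mem_rowSet] at h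
      omega
    have hrow0 : ∀ i j : ℕ, (i, j) ∈ (cells [a - b] []).image (fun c => (c.1, c.2 + b)) →
        i = 0 := by
      intro i j h
      rw [mem_rowSet] at h
      exact h.1
    have hpos : ∀ i j : ℕ, (i, j) ∈ (cells α β).image (fun c => (c.1 + 1, c.2)) → 0 < i := by
      intro i j h
      rw [mem_shiftSet] at h
      obtain ⟨i', _, rfl⟩ := h
      omega
    constructor
    · rintro ⟨hcol, hrow⟩
      refine ⟨?_, ?_, ?_⟩
      · rintro i j j' hm hm' hjj'
        rw [restrictF_eq_on _ _ hm, restrictF_eq_on _ _ hm']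
        exact hrow i j j' (Finset.mem_union_left _ hm) (Finset.mem_union_left _ hm') hjj'
      · rintro i i' hm hm' hii'
        rw [restrictF_eq_on _ _ hm, restrictF_eq_on _ _ hm']
        exact hcol i i' (Finset.mem_union_right _ hm) (Finset.mem_union_right _ hm') hii'
      · rintro i j j' hm hm' hjj'
        rw [restrictF_eq_on _ _ hm, restrictF_eq_on _ _ hm']
        exact hrow i j j' (Finset.mem_union_right _ hm) (Finset.mem_union_right _ hm') hjj'
    · rintro ⟨h₁, h₂, h₃⟩
      constructor
      · rintro i i' hm hm' hii'
        have hm2 : (i, (0 : ℕ)) ∈ (cells α β).image (fun c => (c.1 + 1, c.2)) := by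
          rcases Finset.mem_union.mp hm with h | h
          · exact absurd h (fun h => hcol0 i h)
          · exact h
        have hm2' : (i', (0 : ℕ)) ∈ (cells α β).image (fun c => (c.1 + 1, c.2)) := by
          rcases Finset.mem_union.mp hm' with h | h
          · exact absurd h (fun h => hcol0 i' h)
          · exact h
        have key := h₂ i i' hm2 hm2' hii'
        rwa [restrictF_eq_on _ _ hm2, restrictF_eq_on _ _ hm2'] at key
      · rintro i j j' hm hm' hjj'
        rcases Finset.mem_union.mp hm with h | h <;>
          rcases Finset.mem_union.mp hm' with h' | h'
        · have key := h₁ i j j' h h' hjj'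
          rwa [restrictF_eq_on _ _ h, restrictF_eq_on _ _ h'] at key
        · exact absurd (hrow0 i j h) (by have := hpos i j' h'; omega)
        · exact absurd (hrow0 i j' h') (by have := hpos i j h; omega)
        · have key := h₃ i j j' h h' hjj'
          rwa [restrictF_eq_on _ _ h, restrictF_eq_on _ _ h'] at key

lemma factor_aux (β : List ℕ) : ∀ (α : List ℕ), IsComposition β → β.length ≤ α.length →
    dualImmaculateF α β =
      dualImmaculateF (α.drop β.length) [] *
        ∏ i ∈ Finset.range β.length, schurF [α.getD i 0 - β.getD i 0] := by
  induction β with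
  | nil =>
    intro α _ _
    simp
  | cons b β' ih =>
    intro α hcomp hlen
    cases α with
    | nil => simp at hlen
    | cons a α' =>
      have hb : 0 < b := hcomp b List.mem_cons_self
      rw [key_peel a b α' β' hb]
      rw [ih α' (fun x hx => hcomp x (List.mem_cons_of_mem b hx))
        (by simpa using hlen)]
      rw [List.length_cons, List.drop_succ_cons, Finset.prod_range_succ']
      simp only [List.getD_cons_zero, List.getD_cons_succ]
      ring

/-- **Factorization of dual immaculate functions**: for `β ≠ ∅` with `β_i < α_i` for
all `1 ≤ i ≤ ℓ(β)`, setting `D₁ = (α_{ℓ(β)+1}, …, α_{ℓ(α)})` (i.e. `α.drop β.length`),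
`𝔖*_{α/β} = 𝔖*_{D₁} ⬝ ∏_{i=1}^{ℓ(β)} s_{(α_i - β_i)}`. -/
theorem dualImmaculate_factorization (α β : List ℕ)
    (hα : IsComposition α) (hβ : IsComposition β) (hβne : β ≠ [])
    (hsub : Subdiagram β α) (hrows : RowsNonempty α β) :
    dualImmaculateF α β =
      dualImmaculateF (α.drop β.length) [] *
        ∏ i ∈ Finset.range β.length, schurF [α.getD i 0 - β.getD i 0] :=
  factor_aux β α hβ hsub.1

end SQS
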